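/- arXiv:math/9301204 — 6 statements merged into one kernel-verified Lean document; each statement's English description precedes it below -/
import Mathlib

section
/- Let L be a first-order language and θ a cardinal. The relation ≺⊗_θ on L-structures is reflexive (M ≺⊗_θ M for every L-structure M) and transitive (if M₁ ≺⊗_θ M₂ and M₂ ≺⊗_θ M₃ then M₁ ≺⊗_θ M₃). -/
open FirstOrder

universe u v

variable {L : FirstOrder.Language.{u, v}} {M : Type w} [L.Structure M]

/-- Two tuples `b`, `b'` from `M` realize the same type over `Z`. -/
def SameTypeOver (Z : Set M) {m : ℕ} (b b' : Fin m → M) : Prop :=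
  ∀ (k : ℕ) (c : Fin k → M), (∀ i, c i ∈ Z) →
    ∀ ψ : L.Formula (Fin m ⊕ Fin k),
      ψ.Realize (Sum.elim b c) ↔ ψ.Realize (Sum.elim b' c)

/-- `X/Y` does not split over `Z`. -/
def DoesNotSplitOver (X Y Z : Set M) : Prop :=
  ∀ (n m : ℕ) (φ : L.Formula (Fin n ⊕ Fin m)) (a : Fin n → M), (∀ i, a i ∈ X) →
    ∀ b b' : Fin m → M, (∀ i, b i ∈ Y) → (∀ i, b' i ∈ Y) →
      SameTypeOver (L := L) Z b b' →
      (φ.Realize (Sum.elim a b) ↔ φ.Realize (Sum.elim a b'))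

/-- `S` is the carrier of an elementary substructure of the ambient structure `M`.
Working inside a fixed ambient structure, a pair of such carriers `S₁ ⊆ S₂` represents a
pair of structures `M₁ ≼ M₂`. -/
def IsElementaryCarrier (S : Set M) : Prop :=
  ∃ E : L.ElementarySubstructure M, (E : Set M) = S

/-- `M₁ ≺⊗_θ M₂` (for carriers `S₁ ⊆ S₂` of elementary substructures of the ambient
structure): for every subset `X` of `M₂` of cardinality `< θ` there is a subset `Y` of `M₁`
of cardinality `< θ` such that `X/M₁` does not split over `Y`. -/
def PrecOtimes (θ : Cardinal.{w}) (S₁ S₂ : Set M) : Prop :=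
  S₁ ⊆ S₂ ∧ ∀ X : Set M, X ⊆ S₂ → Cardinal.mk X < θ →
    ∃ Y : Set M, Y ⊆ S₁ ∧ Cardinal.mk Y < θ ∧ DoesNotSplitOver (L := L) X S₁ Y

private lemma elim_comp_swap {α β γ : Type*} (f : α → γ) (g : β → γ) :
    Sum.elim f g ∘ Sum.swap = Sum.elim g f := funext fun x => by cases x <;> rfl

/-- The relation `≺⊗_θ` is reflexive and transitive (on elementary substructures of a fixed
ambient structure). -/
theorem precOtimes_refl_trans (θ : Cardinal.{w}) :
    (∀ S : Set M, IsElementaryCarrier (L := L) S → PrecOtimes (L := L) θ S S) ∧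
    (∀ S₁ S₂ S₃ : Set M, IsElementaryCarrier (L := L) S₁ → IsElementaryCarrier (L := L) S₂ →
      IsElementaryCarrier (L := L) S₃ →
      PrecOtimes (L := L) θ S₁ S₂ → PrecOtimes (L := L) θ S₂ S₃ →
      PrecOtimes (L := L) θ S₁ S₃) := by
  constructor
  · intro S _
    refine ⟨subset_rfl, fun X hX hXθ => ⟨X, hX, hXθ, ?_⟩⟩
    intro n m φ a ha b b' hb hb' hst
    have h := hst n a ha (φ.relabel Sum.swap)
    simpa [Language.Formula.realize_relabel, elim_comp_swap] using h
  · intro S₁ S₂ S₃ _ _ _ h12 h23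
    refine ⟨h12.1.trans h23.1, fun X hX hXθ => ?_⟩
    obtain ⟨Y, hY2, hYθ, hXY⟩ := h23.2 X hX hXθ
    obtain ⟨Z, hZ1, hZθ, hYZ⟩ := h12.2 Y hY2 hYθ
    refine ⟨Z, hZ1, hZθ, ?_⟩
    intro n m φ a ha b b' hb hb' hst
    apply hXY n m φ a ha b b' (fun i => h12.1 (hb i)) (fun i => h12.1 (hb' i))
    intro k c hc ψ
    have h := hYZ k m (ψ.relabel Sum.swap) c hc b b' hb hb' hst
    simpa [Language.Formula.realize_relabel, elim_comp_swap] using h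
end

section
/- Let L be a first-order language, θ a regular cardinal, δ a limit ordinal, and (M_i : i < δ) a chain of L-structures that is increasing with respect to ≺⊗_θ. Then for every i < δ, M_i ≺⊗_θ ⋃_{j<δ} M_j. -/
open FirstOrder

universe u v

variable {L : FirstOrder.Language.{u, v}} {M : Type w} [L.Structure M]

/-!
Given `X ⊆ ⋃ j, M_j` of size `< θ`, each `x ∈ X` lies in some `M_{j_x}` with `i ≤ j_x`, and
`M_i ≺⊗_θ M_{j_x}` yields a small `Y_x ⊆ M_i` over which `(X ∩ M_{j_x})/M_i` does not split.
Non-splitting only concerns finite tuples from `X`, and since the chain is linearly ordered every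
such tuple lies in a single `X ∩ M_{j_x}`; hence `X/M_i` does not split over `⋃ x, Y_x`, which
has size `< θ` by regularity of `θ`.
-/

theorem SameTypeOver.mono {Z Z' : Set M} {m : ℕ} {b b' : Fin m → M} (hZ : Z ⊆ Z')
    (h : SameTypeOver (L := L) Z' b b') : SameTypeOver (L := L) Z b b' :=
  fun k c hc ψ => h k c (fun l => hZ (hc l)) ψ

theorem DoesNotSplitOver.mono_left {X X' Y Z : Set M} (hX : X' ⊆ X)
    (h : DoesNotSplitOver (L := L) X Y Z) : DoesNotSplitOver (L := L) X' Y Z :=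
  fun n m φ a ha => h n m φ a (fun l => hX (ha l))

/-- The only tuple from `∅` is the empty one, and formulas in `b` alone are part of its type. -/
theorem doesNotSplitOver_empty (Y Z : Set M) : DoesNotSplitOver (L := L) ∅ Y Z := by
  rintro (_ | n) m φ a ha b b' - - hst
  · let g : Fin 0 ⊕ Fin m → Fin m ⊕ Fin 0 := Sum.elim Fin.elim0 Sum.inl
    have hg : ∀ c : Fin m → M, Sum.elim c Fin.elim0 ∘ g = Sum.elim a c := fun c => by
      funext z
      rcases z with z | z
      · exact z.elim0
      · rfl
    simpa only [Language.Formula.realize_relabel, hg] using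
      hst 0 Fin.elim0 (fun l => l.elim0) (φ.relabel g)
  · exact absurd (ha 0) (Set.notMem_empty _)

theorem DoesNotSplitOver.iUnion_of_directed {ι : Type*} {X Z : ι → Set M} {Y : Set M}
    (hX : Directed (· ⊆ ·) X) (h : ∀ k, DoesNotSplitOver (L := L) (X k) Y (Z k)) :
    DoesNotSplitOver (L := L) (⋃ k, X k) Y (⋃ k, Z k) := by
  rintro (_ | n) m φ a ha b b' hb hb' hst
  · exact doesNotSplitOver_empty Y _ 0 m φ a Fin.elim0 b b' hb hb' hst
  · choose k hk using fun l => Set.mem_iUnion.1 (ha l)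
    have : Nonempty ι := ⟨k 0⟩
    obtain ⟨k₀, hk₀⟩ := hX.finite_le k
    exact h k₀ _ m φ a (fun l => hk₀ l (hk l)) b b' hb hb'
      (hst.mono (Set.subset_iUnion Z k₀))

theorem precOtimes_iUnion_of_chain_general (θ : Cardinal.{w}) (hθ : θ.IsRegular)
    (δ : Ordinal.{w}) (S : Ordinal.{w} → Set M)
    (hchain : ∀ i j : Ordinal.{w}, i ≤ j → j < δ → PrecOtimes (L := L) θ (S i) (S j))
    (i : Ordinal.{w}) (hi : i < δ) :
    PrecOtimes (L := L) θ (S i) (⋃ j ∈ Set.Iio δ, S j) := by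
  refine ⟨Set.subset_biUnion_of_mem (u := S) hi, fun X hX hXθ => ?_⟩
  have hindex : ∀ x : X, ∃ j, i ≤ j ∧ j < δ ∧ (x : M) ∈ S j := fun x => by
    obtain ⟨j, hj, hxj⟩ := Set.mem_iUnion₂.1 (hX x.2)
    exact ⟨max i j, le_max_left _ _, max_lt hi hj,
      (hchain j _ (le_max_right _ _) (max_lt hi hj)).1 hxj⟩
  choose j hij hjδ hxj using hindex
  choose Y hYi hYθ hY using fun x => (hchain i (j x) (hij x) (hjδ x)).2 (X ∩ S (j x))
    Set.inter_subset_right ((Cardinal.mk_le_mk_of_subset Set.inter_subset_left).trans_lt hXθ)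
  have hdir : Directed (· ⊆ ·) fun x => X ∩ S (j x) := fun x y => by
    rcases le_total (j x) (j y) with hxy | hyx
    · exact ⟨y, Set.inter_subset_inter_right _ (hchain _ _ hxy (hjδ y)).1, subset_rfl⟩
    · exact ⟨x, subset_rfl, Set.inter_subset_inter_right _ (hchain _ _ hyx (hjδ x)).1⟩
  refine ⟨⋃ x, Y x, Set.iUnion_subset hYi,
    (Cardinal.card_iUnion_lt_iff_forall_of_isRegular hθ hXθ).2 hYθ, ?_⟩
  have hXcover : X ⊆ ⋃ x : X, X ∩ S (j x) := fun x hx =>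
    Set.mem_iUnion_of_mem ⟨x, hx⟩ ⟨hx, hxj ⟨x, hx⟩⟩
  exact (DoesNotSplitOver.iUnion_of_directed hdir hY).mono_left hXcover

/-- If `θ` is regular, `δ` is a limit ordinal, and `(M_i : i < δ)` is a `≺⊗_θ`-increasing
chain of (carriers of) elementary substructures of the ambient structure, then for every
`i < δ`, `M_i ≺⊗_θ ⋃_{j<δ} M_j`. -/
theorem precOtimes_iUnion_of_chain (θ : Cardinal.{w}) (hθ : θ.IsRegular)
    (δ : Ordinal.{w}) (hδ : Order.IsSuccLimit δ) (S : Ordinal.{w} → Set M)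
    (helem : ∀ i < δ, IsElementaryCarrier (L := L) (S i))
    (hchain : ∀ i j : Ordinal.{w}, i ≤ j → j < δ → PrecOtimes (L := L) θ (S i) (S j))
    (i : Ordinal.{w}) (hi : i < δ) :
    PrecOtimes (L := L) θ (S i) (⋃ j ∈ Set.Iio δ, S j) :=
  precOtimes_iUnion_of_chain_general θ hθ δ S hchain i hi
end

section
/- Let G be a (simple) graph and let 0 < k < ω be such that every vertex of G has degree at most k. Then there is a partition of the vertex set of G into k² pieces A₀, …, A_{k²−1} such that for every i < k² and every vertex v, v is adjacent to at most one element of A_i. -/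
/-!
Two vertices with a common neighbour must lie in different pieces, so the pieces can be taken to
be the colour classes of a proper colouring of the graph joining distinct vertices with a common
neighbour. In that graph every vertex has at most `k (k - 1) < k²` neighbours, and a graph whose
degrees are all below `n` is `n`-colourable: well-order the vertices and give each vertex the
least colour not used by its earlier neighbours.
-/

theorem Nat.sInf_compl_le_ncard {s : Set ℕ} (hs : s.Finite) : sInf sᶜ ≤ s.ncard := by
  have hsub : (Finset.range (sInf sᶜ) : Set ℕ) ⊆ s := fun i hi => by
    by_contra h
    exact (Nat.sInf_le h).not_gt (Finset.mem_range.mp hi)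
  simpa using Set.ncard_le_ncard hsub hs

namespace SimpleGraph

section Greedy

variable {V : Type*} (G : SimpleGraph V) {r : V → V → Prop} (hr : WellFounded r)

noncomputable def greedyColoring : V → ℕ :=
  hr.fix fun v c => sInf (Set.range fun w : {w // G.Adj v w ∧ r w v} => c w w.2.2)ᶜ

theorem greedyColoring_eq (v : V) :
    G.greedyColoring hr v = sInf (G.greedyColoring hr '' {w | G.Adj v w ∧ r w v})ᶜ := by
  rw [greedyColoring, hr.fix_eq, Set.image_eq_range]
  rfl

variable {G hr}

theorem greedyColoring_ne {v w : V} (hfin : (G.neighborSet v).Finite) (hadj : G.Adj v w)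
    (hwv : r w v) : G.greedyColoring hr w ≠ G.greedyColoring hr v := by
  have hused : (G.greedyColoring hr '' {u | G.Adj v u ∧ r u v}).Finite :=
    (hfin.subset fun _ h => h.1).image _
  rw [greedyColoring_eq G hr v]
  exact fun h => Nat.sInf_mem hused.infinite_compl.nonempty (h ▸ ⟨w, ⟨hadj, hwv⟩, rfl⟩)

theorem greedyColoring_le_ncard {v : V} (hfin : (G.neighborSet v).Finite) :
    G.greedyColoring hr v ≤ (G.neighborSet v).ncard := by
  have hsub : {w | G.Adj v w ∧ r w v} ⊆ G.neighborSet v := fun _ h => h.1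
  rw [greedyColoring_eq G hr v]
  calc _ ≤ (G.greedyColoring hr '' {w | G.Adj v w ∧ r w v}).ncard :=
        Nat.sInf_compl_le_ncard ((hfin.subset hsub).image _)
    _ ≤ {w | G.Adj v w ∧ r w v}.ncard := Set.ncard_image_le (hfin.subset hsub)
    _ ≤ (G.neighborSet v).ncard := Set.ncard_le_ncard hsub hfin

theorem colorable_of_forall_encard_neighborSet_lt {n : ℕ}
    (h : ∀ v, (G.neighborSet v).encard < n) : G.Colorable n := by
  have hfin v : (G.neighborSet v).Finite := Set.finite_of_encard_le_coe (h v).le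
  have hr := (WellOrderingRel.isWellOrder (α := V)).wf
  refine ⟨Coloring.mk (fun v => ⟨G.greedyColoring hr v, ?_⟩) ?_⟩
  · have hdeg : (G.neighborSet v).ncard < n := by exact_mod_cast (hfin v).cast_ncard_eq ▸ h v
    exact (greedyColoring_le_ncard (hfin v)).trans_lt hdeg
  · intro v w hadj
    simp only [ne_eq, Fin.mk.injEq]
    rcases trichotomous_of WellOrderingRel v w with hvw | rfl | hwv
    · exact greedyColoring_ne (hfin w) hadj.symm hvw
    · exact absurd rfl hadj.ne
    · exact (greedyColoring_ne (hfin v) hadj hwv).symm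

end Greedy

section CommonNeighbors

variable {V : Type*} (G : SimpleGraph V)

def commonNeighborsGraph : SimpleGraph V :=
  fromRel fun u w => (G.commonNeighbors u w).Nonempty

variable {G}

theorem commonNeighborsGraph_adj {u w : V} :
    G.commonNeighborsGraph.Adj u w ↔ u ≠ w ∧ (G.commonNeighbors u w).Nonempty := by
  rw [commonNeighborsGraph, fromRel_adj, commonNeighbors_symm, or_self]

theorem neighborSet_commonNeighborsGraph_subset (u : V) :
    G.commonNeighborsGraph.neighborSet u ⊆ ⋃ v ∈ G.neighborSet u, G.neighborSet v \ {u} := by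
  intro w hw
  obtain ⟨huw, v, huv, hwv⟩ := commonNeighborsGraph_adj.mp hw
  exact Set.mem_biUnion huv ⟨G.adj_symm hwv, huw.symm⟩

theorem encard_neighborSet_commonNeighborsGraph_le {d : ℕ}
    (hdeg : ∀ v, (G.neighborSet v).encard ≤ d + 1) (u : V) :
    (G.commonNeighborsGraph.neighborSet u).encard ≤ (d + 1) * d := by
  have hfin : (G.neighborSet u).Finite := Set.finite_of_encard_le_coe (hdeg u)
  have hdel : ∀ v ∈ hfin.toFinset, (G.neighborSet v \ {u}).encard ≤ d := by
    intro v hv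
    have hu : u ∈ G.neighborSet v := G.adj_symm (hfin.mem_toFinset.mp hv)
    have := Set.encard_sdiff_singleton_add_one hu ▸ hdeg v
    exact (ENat.add_le_add_iff_right ENat.one_ne_top).mp this
  calc (G.commonNeighborsGraph.neighborSet u).encard
      ≤ (⋃ v ∈ hfin.toFinset, G.neighborSet v \ {u}).encard := by
        refine Set.encard_le_encard ?_
        simpa using neighborSet_commonNeighborsGraph_subset u
    _ ≤ ∑ v ∈ hfin.toFinset, (G.neighborSet v \ {u}).encard :=
        hfin.toFinset.set_encard_biUnion_le _
    _ ≤ hfin.toFinset.card * d := by simpa using Finset.sum_le_card_nsmul _ _ _ hdel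
    _ ≤ (d + 1) * d := by
        gcongr
        rw [← Set.encard_coe_eq_coe_finsetCard, hfin.coe_toFinset]
        exact hdeg u

theorem Coloring.subsingleton_preimage_inter_neighborSet {α : Type*}
    (C : G.commonNeighborsGraph.Coloring α) (a : α) (v : V) :
    (C ⁻¹' {a} ∩ G.neighborSet v).Subsingleton := by
  rintro x ⟨hx, hvx⟩ y ⟨hy, hvy⟩
  by_contra hxy
  exact C.valid (commonNeighborsGraph_adj.mpr ⟨hxy, v, G.adj_symm hvx, G.adj_symm hvy⟩)
    (hx.trans hy.symm)

end CommonNeighbors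

end SimpleGraph

/-- If every vertex of a graph `G` has degree at most `k` (where `0 < k < ω`), then the
vertex set can be partitioned into `k²` pieces `A₀, …, A_{k²−1}` such that every vertex is
adjacent to at most one element of each piece. -/
theorem exists_partition_of_bounded_degree {V : Type*} (G : SimpleGraph V) (k : ℕ)
    (hk : 0 < k) (hdeg : ∀ v : V, Cardinal.mk (G.neighborSet v) ≤ k) :
    ∃ A : Fin (k ^ 2) → Set V,
      (∀ v : V, ∃! i, v ∈ A i) ∧
      ∀ (i : Fin (k ^ 2)) (v : V), (A i ∩ G.neighborSet v).Subsingleton := by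
  obtain ⟨d, rfl⟩ : ∃ d, k = d + 1 := ⟨k - 1, by omega⟩
  have hdeg' v : (G.neighborSet v).encard ≤ d + 1 := by exact_mod_cast Cardinal.toENat_le_natCast.mpr (hdeg v)
  have hlt : ((d + 1) * d : ℕ∞) < ((d + 1) ^ 2 : ℕ) := by
    norm_cast
    nlinarith
  obtain ⟨C⟩ := SimpleGraph.colorable_of_forall_encard_neighborSet_lt fun u =>
    (SimpleGraph.encard_neighborSet_commonNeighborsGraph_le hdeg' u).trans_lt hlt
  exact ⟨fun i => C ⁻¹' {i}, fun v => ⟨C v, rfl, fun i hi => hi.symm⟩,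
    C.subsingleton_preimage_inter_neighborSet⟩
end

section
/- Let G be a (simple) graph, let 0 < k < ω be such that every vertex of G has degree at most k, and let λ be an uncountable cardinal. Given any family of λ many sets of vertices, each of cardinality λ, there is a partition of the vertex set of G into k² pieces A₀, …, A_{k²−1} such that for every i < k² and every vertex v, v is adjacent to at most one element of A_i, and moreover every piece A_i meets every set in the given family. -/
universe u

open Cardinal Set

namespace MeetingAux

variable {V : Type u} (G : SimpleGraph V)

/-- `u` and `w` are distinct and have a common neighbour. -/
def HAdj (u w : V) : Prop := u ≠ w ∧ ∃ z, G.Adj z u ∧ G.Adj z w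

lemma HAdj.symm {G : SimpleGraph V} {u w : V} (h : HAdj G u w) : HAdj G w u :=
  ⟨h.1.symm, h.2.imp fun z hz => ⟨hz.2, hz.1⟩⟩

/-- the ball of radius 2 around `u`. -/
def ball2 (u : V) : Set V := {w | w = u ∨ G.Adj u w ∨ ∃ z, G.Adj u z ∧ G.Adj z w}

lemma self_mem_ball2 (u : V) : u ∈ ball2 G u := Or.inl rfl

lemma mem_ball2_comm {G : SimpleGraph V} {u w : V} (h : w ∈ ball2 G u) : u ∈ ball2 G w := by
  rcases h with h | h | ⟨z, h1, h2⟩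
  · exact Or.inl h.symm
  · exact Or.inr (Or.inl h.symm)
  · exact Or.inr (Or.inr ⟨z, h2.symm, h1.symm⟩)

lemma HAdj_mem_ball2 {G : SimpleGraph V} {u w : V} (h : HAdj G u w) : w ∈ ball2 G u := by
  obtain ⟨-, z, h1, h2⟩ := h
  exact Or.inr (Or.inr ⟨z, h1.symm, h2⟩)

lemma ball2_countable (k : ℕ) (hdeg : ∀ v : V, Cardinal.mk (G.neighborSet v) ≤ k) (u : V) :
    (ball2 G u).Countable := by
  have hc : ∀ v : V, (G.neighborSet v).Countable := fun v =>
    (Cardinal.lt_aleph0_iff_set_finite.mp ((hdeg v).trans_lt (nat_lt_aleph0 k))).countable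
  have hsub : ball2 G u ⊆ {u} ∪ G.neighborSet u ∪ ⋃ z ∈ G.neighborSet u, G.neighborSet z := by
    rintro w (rfl | h | ⟨z, h1, h2⟩)
    · exact Or.inl (Or.inl rfl)
    · exact Or.inl (Or.inr h)
    · exact Or.inr (mem_biUnion h1 h2)
  exact Countable.mono hsub
    (((countable_singleton u).union (hc u)).union ((hc u).biUnion fun z _ => hc z))

lemma mk_HAdj_le (k : ℕ) (hk : 0 < k) (hdeg : ∀ v : V, Cardinal.mk (G.neighborSet v) ≤ k) (v : V) :
    #{u | HAdj G v u} ≤ ((k * (k - 1) : ℕ) : Cardinal) := by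
  have hfin : ∀ z : V, (G.neighborSet z).Finite := fun z =>
    Cardinal.lt_aleph0_iff_set_finite.mp ((hdeg z).trans_lt (nat_lt_aleph0 k))
  have hdiff : ∀ z : G.neighborSet v,
      #(G.neighborSet (z : V) \ {v} : Set V) ≤ ((k - 1 : ℕ) : Cardinal) := by
    intro z
    have hvz : ({v} : Set V) ⊆ G.neighborSet (z : V) := by
      rintro x rfl; exact z.2.symm
    have h1 : #(G.neighborSet (z : V) \ {v} : Set V) + 1 = #(G.neighborSet (z : V)) := by
      rw [← Cardinal.mk_singleton v]; exact Cardinal.mk_diff_add_mk hvz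
    have h2 : #(G.neighborSet (z : V) \ {v} : Set V) + 1 ≤ ((k - 1 : ℕ) : Cardinal) + 1 := by
      rw [h1]
      calc #(G.neighborSet (z : V)) ≤ (k : Cardinal) := hdeg _
        _ = ((k - 1 : ℕ) : Cardinal) + 1 := by
            norm_cast
            omega
    exact (Cardinal.add_le_add_iff_of_lt_aleph0 Cardinal.one_lt_aleph0).mp h2
  have hsub : {u | HAdj G v u} ⊆ ⋃ z : G.neighborSet v, (G.neighborSet (z : V) \ {v}) := by
    rintro u ⟨hne, z, hzv, hzu⟩
    exact mem_iUnion.2 ⟨⟨z, hzv.symm⟩, hzu, fun h => hne (h.symm ▸ rfl)⟩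
  calc #{u | HAdj G v u} ≤ #(⋃ z : G.neighborSet v, (G.neighborSet (z : V) \ {v})) :=
        mk_le_mk_of_subset hsub
    _ ≤ Cardinal.sum fun z : G.neighborSet v => #(G.neighborSet (z : V) \ {v} : Set V) :=
        mk_iUnion_le_sum_mk
    _ ≤ Cardinal.sum fun _ : G.neighborSet v => ((k - 1 : ℕ) : Cardinal) :=
        Cardinal.sum_le_sum _ _ hdiff
    _ = #(G.neighborSet v) * ((k - 1 : ℕ) : Cardinal) := Cardinal.sum_const' _ _
    _ ≤ (k : Cardinal) * ((k - 1 : ℕ) : Cardinal) := mul_le_mul_left (hdeg v) _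
    _ = ((k * (k - 1) : ℕ) : Cardinal) := by push_cast; ring

section Pick

variable [Nonempty V] {O : Type u} [LinearOrder O] [WellFoundedLT O]

open scoped Classical in
noncomputable def pickFun (T : O → Set V) : O → V :=
  (wellFounded_lt (α := O)).fix fun x f =>
    if h : (T x \ ⋃ y : Iio x, ball2 G (f y.1 y.2)).Nonempty then h.choose
    else Classical.arbitrary V

open scoped Classical in
lemma pickFun_eq (T : O → Set V) (x : O) :
    pickFun G T x =
      if h : (T x \ ⋃ y : Iio x, ball2 G (pickFun G T y.1)).Nonempty then h.choose
      else Classical.arbitrary V := by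
  conv_lhs => rw [pickFun]
  rw [WellFounded.fix_eq]
  rfl

lemma pickFun_mem (T : O → Set V)
    (hne : ∀ x : O, (T x \ ⋃ y : Iio x, ball2 G (pickFun G T y.1)).Nonempty) (x : O) :
    pickFun G T x ∈ T x \ ⋃ y : Iio x, ball2 G (pickFun G T y.1) := by
  classical
  rw [pickFun_eq G T x, dif_pos (hne x)]
  exact (hne x).choose_spec

end Pick

section Color

variable {m : ℕ} (hm : 0 < m) (H : V → V → Prop) (sel : Set V) (sc : V → Fin m)

open scoped Classical in
noncomputable def colFun : V → Fin m :=
  (IsWellFounded.wf (α := V) (r := WellOrderingRel)).fix fun v f =>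
    if v ∈ sel then sc v
    else if h : ∃ c : Fin m,
        ¬ ∃ u, H v u ∧ ((u ∈ sel ∧ sc u = c) ∨ ∃ hr : WellOrderingRel u v, f u hr = c) then
      h.choose
    else ⟨0, hm⟩

/-- the set of colors forbidden for `v`. -/
def forbSet (v : V) : Set (Fin m) :=
  {c | ∃ u, H v u ∧
    ((u ∈ sel ∧ sc u = c) ∨ ∃ _ : WellOrderingRel u v, colFun hm H sel sc u = c)}

open scoped Classical in
lemma colFun_eq (v : V) :
    colFun hm H sel sc v =
      if v ∈ sel then sc v
      else if h : ∃ c : Fin m, c ∉ forbSet hm H sel sc v then h.choose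
      else ⟨0, hm⟩ := by
  conv_lhs => rw [colFun]
  rw [WellFounded.fix_eq]
  rfl

lemma colFun_sel {v : V} (hv : v ∈ sel) : colFun hm H sel sc v = sc v := by
  classical
  rw [colFun_eq, if_pos hv]

lemma colFun_notMem_forb {v : V} (hv : v ∉ sel)
    (h : ∃ c : Fin m, c ∉ forbSet hm H sel sc v) :
    colFun hm H sel sc v ∉ forbSet hm H sel sc v := by
  classical
  rw [colFun_eq, if_neg hv, dif_pos h]
  exact h.choose_spec

lemma colFun_proper (Hsymm : ∀ u v, H u v → H v u) (Hne : ∀ u v, H u v → u ≠ v)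
    (hsel : ∀ u v, u ∈ sel → v ∈ sel → ¬ H u v)
    (hex : ∀ v, v ∉ sel → ∃ c : Fin m, c ∉ forbSet hm H sel sc v)
    {u v : V} (huv : H u v) : colFun hm H sel sc u ≠ colFun hm H sel sc v := by
  have key : ∀ u v : V, H v u → v ∉ sel → (u ∈ sel ∨ WellOrderingRel u v) →
      colFun hm H sel sc u ≠ colFun hm H sel sc v := by
    intro u v h hv hcase heq
    apply colFun_notMem_forb hm H sel sc hv (hex v hv)
    refine ⟨u, h, ?_⟩
    rcases hcase with hu | hr
    · exact Or.inl ⟨hu, by rw [← colFun_sel hm H sel sc hu]; exact heq⟩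
    · exact Or.inr ⟨hr, heq⟩
  by_cases hu : u ∈ sel <;> by_cases hv : v ∈ sel
  · exact absurd huv (hsel u v hu hv)
  · exact key u v (Hsymm u v huv) hv (Or.inl hu)
  · exact fun heq => key v u huv hu (Or.inl hv) heq.symm
  · rcases trichotomous_of WellOrderingRel u v with hr | heq | hr
    · exact key u v (Hsymm u v huv) hv (Or.inr hr)
    · exact absurd heq (Hne u v huv)
    · exact fun heq => key v u huv hu (Or.inr hr) heq.symm

lemma exists_notMem_forb {n : ℕ} (hn : n < m) (v : V)
    (hcard : #{u | H v u} ≤ (n : Cardinal)) :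
    ∃ c : Fin m, c ∉ forbSet hm H sel sc v := by
  classical
  set g : V → Fin m := fun u => if u ∈ sel then sc u else colFun hm H sel sc u with hg
  have hsub : forbSet hm H sel sc v ⊆ g '' {u | H v u} := by
    rintro c ⟨u, hu, hc⟩
    refine ⟨u, hu, ?_⟩
    rcases hc with ⟨husel, hsc⟩ | ⟨-, hcol⟩
    · simp only [hg, if_pos husel]; exact hsc
    · by_cases husel : u ∈ sel
      · simp only [hg, if_pos husel]
        rw [← colFun_sel hm H sel sc husel]; exact hcol
      · simp only [hg, if_neg husel]; exact hcol
  by_contra hall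
  push_neg at hall
  have huniv : forbSet hm H sel sc v = Set.univ := Set.eq_univ_of_forall hall
  have h1 : (m : Cardinal) ≤ #(forbSet hm H sel sc v) := by
    rw [huniv, Cardinal.mk_univ, Cardinal.mk_fintype, Fintype.card_fin]
  have h2 : Cardinal.lift.{u} #(forbSet hm H sel sc v) ≤ Cardinal.lift.{0} #{u | H v u} :=
    (Cardinal.lift_le.mpr (mk_le_mk_of_subset hsub)).trans Cardinal.mk_image_le_lift
  have h3 : ((m : ℕ) : Cardinal.{u}) ≤ ((n : ℕ) : Cardinal.{u}) :=
    calc ((m : ℕ) : Cardinal.{u}) = Cardinal.lift.{u} ((m : ℕ) : Cardinal.{0}) := by simp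
      _ ≤ Cardinal.lift.{u} #(forbSet hm H sel sc v) := Cardinal.lift_le.mpr h1
      _ ≤ Cardinal.lift.{0} #{u | H v u} := h2
      _ = #{u | H v u} := Cardinal.lift_uzero _
      _ ≤ (n : Cardinal) := hcard
  exact absurd h3 (by exact_mod_cast Nat.not_le.mpr hn)

end Color

end MeetingAux

open MeetingAux

/-- If every vertex of a graph `G` has degree at most `k` (where `0 < k < ω`) and `λ` is an
uncountable cardinal, then given any family of `λ` many sets of vertices, each of
cardinality `λ`, the vertex set can be partitioned into `k²` pieces `A₀, …, A_{k²−1}` such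
that every vertex is adjacent to at most one element of each piece, and moreover each piece
meets every set of the given family. -/
theorem exists_partition_of_bounded_degree_meeting {V : Type u} (G : SimpleGraph V) (k : ℕ)
    (hk : 0 < k) (hdeg : ∀ v : V, Cardinal.mk (G.neighborSet v) ≤ k)
    (lam : Cardinal.{u}) (hlam : Cardinal.aleph0 < lam)
    {ι : Type u} (hι : Cardinal.mk ι = lam)
    (F : ι → Set V) (hF : ∀ j, Cardinal.mk (F j) = lam) :
    ∃ A : Fin (k ^ 2) → Set V,
      (∀ v : V, ∃! i, v ∈ A i) ∧
      (∀ (i : Fin (k ^ 2)) (v : V), (A i ∩ G.neighborSet v).Subsingleton) ∧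
      ∀ (i : Fin (k ^ 2)) (j : ι), (A i ∩ F j).Nonempty := by
  classical
  have hlam0 : lam ≠ 0 := (aleph0_pos.trans hlam).ne'
  have hV : Nonempty V := by
    obtain ⟨j⟩ : Nonempty ι := Cardinal.mk_ne_zero_iff.mp (hι.symm ▸ hlam0)
    obtain ⟨⟨v, -⟩⟩ : Nonempty (F j) := Cardinal.mk_ne_zero_iff.mp ((hF j).symm ▸ hlam0)
    exact ⟨v⟩
  set m := k ^ 2 with hmdef
  have hm : 0 < m := pow_pos hk 2
  have hP : #(Fin m × ι) = lam := by
    have h1 : #(Fin m × ι) = (m : Cardinal) * lam := by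
      simp [Cardinal.mk_prod, hι]
    rw [h1]
    exact Cardinal.mul_eq_right hlam.le ((nat_lt_aleph0 m).le.trans hlam.le)
      (Nat.cast_ne_zero.mpr hm.ne')
  set O := lam.ord.ToType with hOdef
  have hO : #O = lam := Cardinal.mk_ord_toType lam
  obtain ⟨e⟩ : Nonempty (O ≃ (Fin m × ι)) := Cardinal.eq.mp (hO.trans hP.symm)
  set T : O → Set V := fun x => F (e x).2 with hT
  have hIio : ∀ x : O, #(Iio x) < lam := fun x => Cardinal.mk_Iio_ord_toType x
  have hcb : ∀ u : V, (ball2 G u).Countable := ball2_countable G k hdeg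
  have hne : ∀ x : O, (T x \ ⋃ y : Iio x, ball2 G (pickFun G T y.1)).Nonempty := by
    intro x
    have hU : #(⋃ y : Iio x, ball2 G (pickFun G T y.1)) < lam :=
      calc #(⋃ y : Iio x, ball2 G (pickFun G T y.1))
          ≤ Cardinal.sum fun y : Iio x => #(ball2 G (pickFun G T y.1)) :=
            Cardinal.mk_iUnion_le_sum_mk
        _ ≤ Cardinal.sum fun _ : Iio x => Cardinal.aleph0 :=
            Cardinal.sum_le_sum _ _ fun y => (hcb _).le_aleph0
        _ = #(Iio x) * Cardinal.aleph0 := Cardinal.sum_const' _ _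
        _ < lam := Cardinal.mul_lt_of_lt hlam.le (hIio x) hlam
    rw [Set.diff_nonempty]
    intro hsub
    have h1 := (mk_le_mk_of_subset hsub).trans_lt hU
    rw [hT] at h1
    simp only [hF (e x).2] at h1
    exact lt_irrefl _ h1
  have pmem := pickFun_mem G T hne
  set p : O → V := pickFun G T with hp
  have pT : ∀ x, p x ∈ F (e x).2 := fun x => (pmem x).1
  have pnb : ∀ x y : O, y < x → p x ∉ ball2 G (p y) := by
    intro x y hy hmem
    exact (pmem x).2 (mem_iUnion.2 ⟨⟨y, hy⟩, hmem⟩)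
  have pball : ∀ x y : O, x ≠ y → p x ∉ ball2 G (p y) := by
    intro x y hxy hmem
    rcases lt_or_gt_of_ne hxy with h | h
    · exact pnb y x h (mem_ball2_comm hmem)
    · exact pnb x y h hmem
  have pinj : Function.Injective p := by
    intro x y h
    by_contra hxy
    exact pball x y hxy (h ▸ self_mem_ball2 G (p y))
  set sel : Set V := Set.range p with hseldef
  set sc : V → Fin m := fun v => if h : ∃ x, p x = v then (e h.choose).1 else ⟨0, hm⟩ with hscdef
  have hsc : ∀ x, sc (p x) = (e x).1 := by
    intro x
    have h : ∃ y, p y = p x := ⟨x, rfl⟩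
    simp only [hscdef, dif_pos h]
    rw [pinj h.choose_spec]
  have hselind : ∀ u v : V, u ∈ sel → v ∈ sel → ¬ HAdj G u v := by
    rintro _ _ ⟨x, rfl⟩ ⟨y, rfl⟩ h
    have hxy : y ≠ x := fun hc => h.1 (by rw [hc])
    exact pball y x hxy (HAdj_mem_ball2 h)
  have hkk : k * (k - 1) < m := by
    rw [hmdef, pow_two]
    exact (mul_lt_mul_iff_right₀ hk).mpr (Nat.sub_lt hk one_pos)
  have hex : ∀ v : V, v ∉ sel → ∃ c : Fin m, c ∉ forbSet hm (HAdj G) sel sc v := fun v _ =>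
    exists_notMem_forb hm (HAdj G) sel sc hkk v (mk_HAdj_le G k hk hdeg v)
  have hproper : ∀ u v : V, HAdj G u v →
      colFun hm (HAdj G) sel sc u ≠ colFun hm (HAdj G) sel sc v :=
    fun u v => colFun_proper hm _ sel sc (fun _ _ h => h.symm) (fun _ _ h => h.1) hselind hex
  set col := colFun hm (HAdj G) sel sc with hcol
  refine ⟨fun i => {v | col v = i}, fun v => ⟨col v, rfl, fun y hy => hy.symm⟩, ?_, ?_⟩
  · intro i v u hu w hw
    by_contra hne'
    exact hproper u w ⟨hne', v, hu.2, hw.2⟩ (hu.1.trans hw.1.symm)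
  · intro i j
    refine ⟨p (e.symm (i, j)), ?_, ?_⟩
    · have h1 : p (e.symm (i, j)) ∈ sel := ⟨_, rfl⟩
      show col (p (e.symm (i, j))) = i
      rw [hcol, colFun_sel hm (HAdj G) sel sc h1, hsc, e.apply_symm_apply]
    · have h2 := pT (e.symm (i, j))
      rwa [e.apply_symm_apply] at h2
end

section
/- Let (L, <) be a dense linear order, let A ⊆ L be somewhere dense, let (L', <') be a linear order, and let 𝓕 be a finite collection of functions from A to L'. Then there exist a finite collection 𝓘 of pairwise disjoint intervals of L' and a somewhere dense set A' ⊆ A such that for all f, g ∈ 𝓕, either f ↾ A' ≡ g ↾ A', or there are disjoint intervals I, J ∈ 𝓘 with f(A') ⊆ I and g(A') ⊆ J. -/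
variable {α : Type*} [LinearOrder α]

/-- A subset `A` of a linear order is somewhere dense if there is a nonempty open interval
`(a, b)` in which `A` is dense, i.e., every nonempty open subinterval of `(a, b)` meets `A`. -/
def SomewhereDense (A : Set α) : Prop :=
  ∃ a b : α, a < b ∧
    ∀ c d : α, a ≤ c → c < d → d ≤ b → (Set.Ioo c d).Nonempty →
      (A ∩ Set.Ioo c d).Nonempty

/-- A subset is nowhere dense if it is not somewhere dense. -/
def NowhereDenseIn (A : Set α) : Prop := ¬ SomewhereDense A

/-- `f ≡ g` on `A'`: for every nonempty open interval `I` of the target order, the symmetric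
difference of `(f ↾ A')⁻¹(I)` and `(g ↾ A')⁻¹(I)` is nowhere dense. -/
def EquivModNwd {β : Type*} [LinearOrder β] (A' : Set α) (f g : α → β) : Prop :=
  ∀ c d : β, (Set.Ioo c d).Nonempty →
    NowhereDenseIn (symmDiff (A' ∩ f ⁻¹' Set.Ioo c d) (A' ∩ g ⁻¹' Set.Ioo c d))

lemma somewhereDense_mono {A B : Set α} (hAB : A ⊆ B) (hA : SomewhereDense A) :
    SomewhereDense B := by
  obtain ⟨a, b, hab, h⟩ := hA
  exact ⟨a, b, hab, fun c d h1 h2 h3 h4 =>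
    Set.Nonempty.mono (Set.inter_subset_inter_left _ hAB) (h c d h1 h2 h3 h4)⟩

lemma somewhereDense_union {A B : Set α} (h : SomewhereDense (A ∪ B)) :
    SomewhereDense A ∨ SomewhereDense B := by
  by_contra hc
  push_neg at hc
  obtain ⟨hA, hB⟩ := hc
  unfold SomewhereDense at hA hB
  push_neg at hA hB
  obtain ⟨a, b, hab, hdense⟩ := h
  obtain ⟨c, d, hac, hcd, hdb, hne, hAe⟩ := hA a b hab
  obtain ⟨c', d', hcc', hc'd', hd'd, hne', hBe⟩ := hB c d hcd
  obtain ⟨x, hx, hx2⟩ := hdense c' d' (hac.trans hcc') hc'd' (hd'd.trans hdb) hne'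
  rcases hx with hx | hx
  · exact Set.eq_empty_iff_forall_notMem.1 hAe x ⟨hx, Set.Ioo_subset_Ioo hcc' hd'd hx2⟩
  · exact Set.eq_empty_iff_forall_notMem.1 hBe x ⟨hx, hx2⟩

lemma somewhereDense_nonempty [DenselyOrdered α] {A : Set α} (h : SomewhereDense A) :
    A.Nonempty := by
  obtain ⟨a, b, hab, hd⟩ := h
  obtain ⟨x, hx, _⟩ := hd a b le_rfl hab le_rfl (Set.nonempty_Ioo.2 hab)
  exact ⟨x, hx⟩

lemma nowhereDense_subset {A B : Set α} (h : A ⊆ B) (hB : ¬ SomewhereDense B) :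
    ¬ SomewhereDense A :=
  fun hA => hB (somewhereDense_mono h hA)

lemma somewhereDense_split {A B : Set α} (hA : SomewhereDense A) :
    SomewhereDense (A ∩ B) ∨ SomewhereDense (A \ B) := by
  apply somewhereDense_union
  apply somewhereDense_mono _ hA
  intro x hx
  by_cases h : x ∈ B
  · exact Or.inl ⟨hx, h⟩
  · exact Or.inr ⟨hx, h⟩

lemma equivModNwd_mono {β : Type*} [LinearOrder β] {A' A'' : Set α} (h : A'' ⊆ A')
    {F G : α → β} (he : EquivModNwd A' F G) : EquivModNwd A'' F G := by
  intro c d hcd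
  apply nowhereDense_subset _ (he c d hcd)
  intro x hx
  rw [Set.mem_symmDiff] at hx ⊢
  rcases hx with ⟨⟨h1, h2⟩, h3⟩ | ⟨⟨h1, h2⟩, h3⟩
  · exact Or.inl ⟨⟨h h1, h2⟩, fun hh => h3 ⟨h1, hh.2⟩⟩
  · exact Or.inr ⟨⟨h h1, h2⟩, fun hh => h3 ⟨h1, hh.2⟩⟩

lemma sep_of_pointwise {β : Type*} [LinearOrder β] {S : Set α} (hS : SomewhereDense S)
    {F G : α → β} {c d : β}
    (h : ∀ x ∈ S, F x ∈ Set.Ioo c d ∧ G x ∉ Set.Ioo c d) :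
    ∃ A'', A'' ⊆ S ∧ SomewhereDense A'' ∧ ∃ L : Set β, IsLowerSet L ∧
      (((∀ x ∈ A'', F x ∈ L) ∧ ∀ x ∈ A'', G x ∉ L) ∨
       ((∀ x ∈ A'', G x ∈ L) ∧ ∀ x ∈ A'', F x ∉ L)) := by
  rcases somewhereDense_split (B := {x | d ≤ G x}) hS with h1 | h1
  · refine ⟨_, Set.inter_subset_left, h1, Set.Iio d, isLowerSet_Iio d, Or.inl ⟨?_, ?_⟩⟩
    · intro x hx
      exact (h x hx.1).1.2
    · intro x hx hL
      exact absurd hx.2 (not_le.2 hL)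
  · refine ⟨_, Set.diff_subset, h1, Set.Iic c, isLowerSet_Iic c, Or.inr ⟨?_, ?_⟩⟩
    · intro x hx
      have hG := (h x hx.1).2
      have hGd : G x < d := not_le.1 hx.2
      by_contra hcc
      exact hG ⟨not_le.1 (fun hh => hcc hh), hGd⟩
    · intro x hx
      exact not_le.2 (h x hx.1).1.1

lemma dichotomy {β : Type*} [LinearOrder β] {A' : Set α} (h : SomewhereDense A')
    (F G : α → β) :
    EquivModNwd A' F G ∨ ∃ A'', A'' ⊆ A' ∧ SomewhereDense A'' ∧ ∃ L : Set β, IsLowerSet L ∧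
      (((∀ x ∈ A'', F x ∈ L) ∧ ∀ x ∈ A'', G x ∉ L) ∨
       ((∀ x ∈ A'', G x ∈ L) ∧ ∀ x ∈ A'', F x ∉ L)) := by
  by_cases he : EquivModNwd A' F G
  · exact Or.inl he
  right
  unfold EquivModNwd NowhereDenseIn at he
  push_neg at he
  obtain ⟨c, d, hne, hsd⟩ := he
  rw [Set.symmDiff_def] at hsd
  rcases somewhereDense_union hsd with h1 | h1
  · have hpt : ∀ x ∈ (A' ∩ F ⁻¹' Set.Ioo c d) \ (A' ∩ G ⁻¹' Set.Ioo c d),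
        F x ∈ Set.Ioo c d ∧ G x ∉ Set.Ioo c d := by
      intro x hx
      exact ⟨hx.1.2, fun hG => hx.2 ⟨hx.1.1, hG⟩⟩
    obtain ⟨A'', hsub, hswd, L, hL, hd'⟩ := sep_of_pointwise h1 hpt
    exact ⟨A'', hsub.trans (fun x hx => hx.1.1), hswd, L, hL, hd'⟩
  · have hpt : ∀ x ∈ (A' ∩ G ⁻¹' Set.Ioo c d) \ (A' ∩ F ⁻¹' Set.Ioo c d),
        G x ∈ Set.Ioo c d ∧ F x ∉ Set.Ioo c d := by
      intro x hx
      exact ⟨hx.1.2, fun hF => hx.2 ⟨hx.1.1, hF⟩⟩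
    obtain ⟨A'', hsub, hswd, L, hL, hd'⟩ := sep_of_pointwise h1 hpt
    exact ⟨A'', hsub.trans (fun x hx => hx.1.1), hswd, L, hL, hd'.symm⟩

lemma refine_pairs {β K : Type*} [LinearOrder β] (f : K → α → β)
    {A : Set α} (hA : SomewhereDense A) (s : Finset (K × K)) :
    ∃ A', A' ⊆ A ∧ SomewhereDense A' ∧ ∀ p ∈ s,
      EquivModNwd A' (f p.1) (f p.2) ∨ ∃ L : Set β, IsLowerSet L ∧
        (((∀ x ∈ A', f p.1 x ∈ L) ∧ ∀ x ∈ A', f p.2 x ∉ L) ∨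
         ((∀ x ∈ A', f p.2 x ∈ L) ∧ ∀ x ∈ A', f p.1 x ∉ L)) := by
  classical
  induction s using Finset.induction_on with
  | empty => exact ⟨A, subset_rfl, hA, by simp⟩
  | @insert p s hp ih =>
    obtain ⟨A', hsub, hswd, hprop⟩ := ih
    rcases dichotomy hswd (f p.1) (f p.2) with he | ⟨A'', hsub'', hswd'', L, hL, hd⟩
    · refine ⟨A', hsub, hswd, ?_⟩
      intro q hq
      rcases Finset.mem_insert.1 hq with rfl | hq
      · exact Or.inl he
      · exact hprop q hq
    · refine ⟨A'', hsub''.trans hsub, hswd'', ?_⟩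
      intro q hq
      rcases Finset.mem_insert.1 hq with rfl | hq
      · exact Or.inr ⟨L, hL, hd⟩
      · rcases hprop q hq with he | ⟨L', hL', hd'⟩
        · exact Or.inl (equivModNwd_mono hsub'' he)
        · refine Or.inr ⟨L', hL', ?_⟩
          rcases hd' with ⟨h1, h2⟩ | ⟨h1, h2⟩
          · exact Or.inl ⟨fun x hx => h1 x (hsub'' hx), fun x hx => h2 x (hsub'' hx)⟩
          · exact Or.inr ⟨fun x hx => h1 x (hsub'' hx), fun x hx => h2 x (hsub'' hx)⟩

lemma refine_straddle {β K : Type*} [LinearOrder β] (f : K → α → β) (L : K × K → Set β)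
    {A : Set α} (hA : SomewhereDense A) (s : Finset (K × (K × K))) :
    ∃ A', A' ⊆ A ∧ SomewhereDense A' ∧ ∀ q ∈ s,
      (∀ x ∈ A', f q.1 x ∈ L q.2) ∨ (∀ x ∈ A', f q.1 x ∉ L q.2) := by
  classical
  induction s using Finset.induction_on with
  | empty => exact ⟨A, subset_rfl, hA, by simp⟩
  | @insert q s hq ih =>
    obtain ⟨A', hsub, hswd, hprop⟩ := ih
    rcases somewhereDense_split (B := {x | f q.1 x ∈ L q.2}) hswd with h1 | h1
    · refine ⟨_, Set.inter_subset_left.trans hsub, h1, ?_⟩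
      intro r hr
      rcases Finset.mem_insert.1 hr with rfl | hr
      · exact Or.inl fun x hx => hx.2
      · rcases hprop r hr with h | h
        · exact Or.inl fun x hx => h x hx.1
        · exact Or.inr fun x hx => h x hx.1
    · refine ⟨_, Set.diff_subset.trans hsub, h1, ?_⟩
      intro r hr
      rcases Finset.mem_insert.1 hr with rfl | hr
      · exact Or.inr fun x hx => hx.2
      · rcases hprop r hr with h | h
        · exact Or.inl fun x hx => h x hx.1
        · exact Or.inr fun x hx => h x hx.1

/-- Let `A` be a somewhere dense subset of a dense linear order and `𝓕` a finite collection
of functions from `A` to a linear order `β`.  Then there are a finite collection `𝓘` of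
pairwise disjoint intervals of `β` and a somewhere dense `A' ⊆ A` such that any two
functions of `𝓕` are either `≡` on `A'`, or map `A'` into two disjoint intervals of `𝓘`. -/
theorem exists_somewhereDense_interval_separation [DenselyOrdered α] {β : Type*}
    [LinearOrder β] (A : Set α) (hA : SomewhereDense A) {K : Type*} [Finite K]
    (f : K → α → β) :
    ∃ (N : ℕ) (J : Fin N → Set β),
      (∀ i, (J i).OrdConnected) ∧
      (∀ i j, i ≠ j → Disjoint (J i) (J j)) ∧
      ∃ A' : Set α, A' ⊆ A ∧ SomewhereDense A' ∧
        ∀ k l : K, EquivModNwd A' (f k) (f l) ∨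
          ∃ i j, i ≠ j ∧ (f k) '' A' ⊆ J i ∧ (f l) '' A' ⊆ J j := by
  classical
  have hK := Fintype.ofFinite K
  obtain ⟨A₁, hsub₁, hswd₁, h₁⟩ := refine_pairs f hA Finset.univ
  have hLex : ∀ p : K × K, ∃ L : Set β, IsLowerSet L ∧
      (EquivModNwd A₁ (f p.1) (f p.2) ∨
       ((∀ x ∈ A₁, f p.1 x ∈ L) ∧ ∀ x ∈ A₁, f p.2 x ∉ L) ∨
       ((∀ x ∈ A₁, f p.2 x ∈ L) ∧ ∀ x ∈ A₁, f p.1 x ∉ L)) := by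
    intro p
    rcases h₁ p (Finset.mem_univ p) with he | ⟨L, hL, hd⟩
    · exact ⟨∅, fun a b _ h => h, Or.inl he⟩
    · exact ⟨L, hL, Or.inr hd⟩
  choose L hLlow hLsep using hLex
  obtain ⟨A₂, hsub₂, hswd₂, h₂⟩ := refine_straddle f L hswd₁ Finset.univ
  have hstr : ∀ (k : K) (p : K × K),
      (∀ x ∈ A₂, f k x ∈ L p) ∨ (∀ x ∈ A₂, f k x ∉ L p) :=
    fun k p => h₂ (k, p) (Finset.mem_univ _)
  have hA₂ne : A₂.Nonempty := somewhereDense_nonempty hswd₂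
  set V : ((K × K) → Bool) → Set β :=
    fun χ => ⋂ p, if χ p then L p else (L p)ᶜ with hV
  set σ : K → (K × K) → Bool :=
    fun k p => if ∀ x ∈ A₂, f k x ∈ L p then true else false with hσ
  have hmemV : ∀ k, ∀ x ∈ A₂, f k x ∈ V (σ k) := by
    intro k x hx
    apply Set.mem_iInter.2
    intro p
    by_cases h : ∀ y ∈ A₂, f k y ∈ L p
    · have : σ k p = true := by simp only [hσ]; exact if_pos h
      rw [this, if_pos rfl]
      exact h x hx
    · have : σ k p = false := by simp only [hσ]; exact if_neg h
      rw [this]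
      simp only [Bool.false_eq_true, if_false]
      rcases hstr k p with h' | h'
      · exact absurd h' h
      · exact h' x hx
  have hVsubT : ∀ (χ : (K × K) → Bool) (p : K × K), χ p = true → V χ ⊆ L p := by
    intro χ p hp
    have := Set.iInter_subset (fun p => if χ p then L p else (L p)ᶜ) p
    rwa [hp, if_pos rfl] at this
  have hVsubF : ∀ (χ : (K × K) → Bool) (p : K × K), χ p = false → V χ ⊆ (L p)ᶜ := by
    intro χ p hp
    have := Set.iInter_subset (fun p => if χ p then L p else (L p)ᶜ) p
    rw [hp] at this
    simpa using this
  set e : ((K × K) → Bool) ≃ Fin (Fintype.card ((K × K) → Bool)) :=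
    Fintype.equivFin ((K × K) → Bool) with he
  refine ⟨Fintype.card ((K × K) → Bool), fun i => V (e.symm i), ?_, ?_, A₂,
    hsub₂.trans hsub₁, hswd₂, ?_⟩
  · intro i
    apply Set.ordConnected_iInter
    intro p
    by_cases h : e.symm i p = true
    · rw [h, if_pos rfl]
      exact (hLlow p).ordConnected
    · rw [Bool.not_eq_true] at h
      rw [h]
      simp only [Bool.false_eq_true, if_false]
      exact (hLlow p).compl.ordConnected
  · intro i j hij
    have hne : e.symm i ≠ e.symm j := fun h => hij (e.symm.injective h)
    obtain ⟨p, hp⟩ := Function.ne_iff.1 hne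
    rcases Bool.eq_false_or_eq_true (e.symm i p) with h1 | h1
    · have h2 : e.symm j p = false := by
        cases h2 : e.symm j p
        · rfl
        · exact absurd (h1.trans h2.symm) hp
      exact Disjoint.mono (hVsubT _ p h1) (hVsubF _ p h2)
        (disjoint_compl_right : Disjoint (L p) (L p)ᶜ)
    · have h2 : e.symm j p = true := by
        cases h2 : e.symm j p
        · exact absurd (h1.trans h2.symm) hp
        · rfl
      exact Disjoint.mono (hVsubF _ p h1) (hVsubT _ p h2)
        (disjoint_compl_left : Disjoint (L p)ᶜ (L p))
  · intro k l
    rcases hLsep (k, l) with heq | ⟨hin, hout⟩ | ⟨hin, hout⟩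
    · exact Or.inl (equivModNwd_mono hsub₂ heq)
    · -- f k into L (k,l) on A₁ ⊇ A₂, f l out of it
      right
      have hin' : ∀ x ∈ A₂, f k x ∈ L (k, l) := fun x hx => hin x (hsub₂ hx)
      have hout' : ∀ x ∈ A₂, f l x ∉ L (k, l) := fun x hx => hout x (hsub₂ hx)
      have hσk : σ k (k, l) = true := by simp only [hσ]; exact if_pos hin'
      have hσl : σ l (k, l) = false := by
        simp only [hσ]
        refine if_neg fun h => ?_
        obtain ⟨x, hx⟩ := hA₂ne
        exact hout' x hx (h x hx)
      refine ⟨e (σ k), e (σ l), ?_, ?_, ?_⟩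
      · intro h
        have := e.injective h
        rw [this] at hσk
        exact Bool.noConfusion (hσk.symm.trans hσl)
      · rw [Set.image_subset_iff]
        intro x hx
        simpa [Equiv.symm_apply_apply] using hmemV k x hx
      · rw [Set.image_subset_iff]
        intro x hx
        simpa [Equiv.symm_apply_apply] using hmemV l x hx
    · -- f l into L (k,l), f k out
      right
      have hin' : ∀ x ∈ A₂, f l x ∈ L (k, l) := fun x hx => hin x (hsub₂ hx)
      have hout' : ∀ x ∈ A₂, f k x ∉ L (k, l) := fun x hx => hout x (hsub₂ hx)
      have hσl : σ l (k, l) = true := by simp only [hσ]; exact if_pos hin'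
      have hσk : σ k (k, l) = false := by
        simp only [hσ]
        refine if_neg fun h => ?_
        obtain ⟨x, hx⟩ := hA₂ne
        exact hout' x hx (h x hx)
      refine ⟨e (σ k), e (σ l), ?_, ?_, ?_⟩
      · intro h
        have := e.injective h
        rw [← this] at hσl
        exact Bool.noConfusion (hσl.symm.trans hσk)
      · rw [Set.image_subset_iff]
        intro x hx
        simpa [Equiv.symm_apply_apply] using hmemV k x hx
      · rw [Set.image_subset_iff]
        intro x hx
        simpa [Equiv.symm_apply_apply] using hmemV l x hx
end

section
/- Let B be an atomic Boolean algebra and let P ⊆ B be a set such that for all atoms x ≠ y of B there is z ∈ P with exactly one of x ≤ z and y ≤ z holding. Then any automorphism of B is determined by its restriction to P: for every automorphism f of B and every atom x, f(x) is the unique atom z of B such that for all y ∈ P, z ≤ f(y) iff x ≤ y; consequently, if f and g are automorphisms of B with f ↾ P = g ↾ P, then f = g. -/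
private lemma le_of_atoms_le {B : Type*} [BooleanAlgebra B] [IsAtomic B] {a b : B}
    (h : ∀ c : B, IsAtom c → c ≤ a → c ≤ b) : a ≤ b := by
  by_contra hab
  have hne : a ⊓ bᶜ ≠ ⊥ := by
    intro h0
    exact hab (by rwa [← sdiff_eq, sdiff_eq_bot_iff] at h0)
  obtain ⟨c, hc, hcle⟩ := (IsAtomic.eq_bot_or_exists_atom_le (a ⊓ bᶜ)).resolve_left hne
  have h1 : c ≤ b := h c hc (hcle.trans inf_le_left)
  have h2 : c ≤ bᶜ := hcle.trans inf_le_right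
  exact hc.1 (le_bot_iff.mp (by simpa using le_inf h1 h2))

/-- Let `B` be an atomic Boolean algebra and `P ⊆ B` a set such that any two distinct atoms
are separated by some `z ∈ P` (exactly one of the two atoms lies below `z`).  Then every
automorphism `f` of `B` is determined by its restriction to `P`: for every atom `x`, `f x`
is the unique atom `z` such that for all `y ∈ P`, `z ≤ f y` iff `x ≤ y`; consequently two
automorphisms agreeing on `P` are equal. -/
theorem orderIso_determined_by_separating_set {B : Type*} [BooleanAlgebra B] [IsAtomic B]
    (P : Set B)
    (hsep : ∀ x y : B, IsAtom x → IsAtom y → x ≠ y →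
      ∃ z ∈ P, (x ≤ z ∧ ¬y ≤ z) ∨ (y ≤ z ∧ ¬x ≤ z)) :
    (∀ (f : B ≃o B) (x : B), IsAtom x →
      IsAtom (f x) ∧ (∀ y ∈ P, f x ≤ f y ↔ x ≤ y) ∧
        ∀ z : B, IsAtom z → (∀ y ∈ P, z ≤ f y ↔ x ≤ y) → z = f x) ∧
    ∀ f g : B ≃o B, (∀ p ∈ P, f p = g p) → f = g := by
  have main : ∀ (f : B ≃o B) (x : B), IsAtom x →
      IsAtom (f x) ∧ (∀ y ∈ P, f x ≤ f y ↔ x ≤ y) ∧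
        ∀ z : B, IsAtom z → (∀ y ∈ P, z ≤ f y ↔ x ≤ y) → z = f x := by
    intro f x hx
    refine ⟨(OrderIso.isAtom_iff f x).mpr hx, fun y _ => f.le_iff_le, ?_⟩
    intro z hz hzP
    have hz' : IsAtom (f.symm z) := (OrderIso.isAtom_iff f.symm z).mpr hz
    by_contra hne
    have hne' : f.symm z ≠ x := by
      intro h; apply hne; rw [← h]; simp
    obtain ⟨w, hwP, hw⟩ := hsep (f.symm z) x hz' hx hne'
    have key : z ≤ f w ↔ x ≤ w := hzP w hwP
    have key2 : f.symm z ≤ w ↔ z ≤ f w := by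
      constructor
      · intro h; simpa using f.monotone h
      · intro h; simpa using f.symm.monotone h
    rcases hw with ⟨h1, h2⟩ | ⟨h1, h2⟩
    · exact h2 (key.mp (key2.mp h1))
    · exact h2 (key2.mpr (key.mpr h1))
  refine ⟨main, fun f g hfg => ?_⟩
  have hAtoms : ∀ x : B, IsAtom x → f x = g x := by
    intro x hx
    exact ((main f x hx).2.2 (g x) ((OrderIso.isAtom_iff g x).mpr hx)
      (fun y hy => by rw [hfg y hy]; exact g.le_iff_le)).symm
  have hle : ∀ (f g : B ≃o B), (∀ x : B, IsAtom x → f x = g x) → ∀ b : B, f b ≤ g b := by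
    intro f g hA b
    apply le_of_atoms_le
    intro c hc hcle
    have hc' : IsAtom (f.symm c) := (OrderIso.isAtom_iff f.symm c).mpr hc
    have : g (f.symm c) ≤ g b := g.monotone (by simpa using f.symm.monotone hcle)
    rwa [← hA _ hc', OrderIso.apply_symm_apply] at this
  have hAtoms' : ∀ x : B, IsAtom x → g x = f x := fun x hx => (hAtoms x hx).symm
  ext b
  exact le_antisymm (hle f g hAtoms b) (hle g f hAtoms' b)
end
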